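/- Let A, B_1, ..., B_m be positive definite d×d matrices and p_1,...,p_m nonnegative weights summing to 1 with log λ(A) majorized by sum_l p_l log λ(B_l). Then for every continuous function f : (0,∞) → [0,∞) with x ↦ log f(e^x) convex on R, and every unitarily invariant norm ‖·‖, one has ‖f(A)‖ ≤ prod_{l=1}^m ‖f(B_l)‖^{p_l}. -/

import Mathlib

open scoped BigOperators ComplexOrder

/-- The eigenvalues of a Hermitian matrix arranged in decreasing order
(counting multiplicities). -/
noncomputable def eigDesc {d : ℕ} {A : Matrix (Fin d) (Fin d) ℂ} (hA : A.IsHermitian) :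
    Fin d → ℝ :=
  fun i => (hA.eigenvalues ∘ Tuple.sort hA.eigenvalues) i.rev

/-- Functional calculus for a Hermitian matrix: apply `f` to the eigenvalues in the
spectral decomposition. -/
noncomputable def herFun {d : ℕ} {A : Matrix (Fin d) (Fin d) ℂ} (hA : A.IsHermitian)
    (f : ℝ → ℝ) : Matrix (Fin d) (Fin d) ℂ :=
  (hA.eigenvectorUnitary : Matrix (Fin d) (Fin d) ℂ) *
    Matrix.diagonal (fun i => (f (hA.eigenvalues i) : ℂ)) *
    star (hA.eigenvectorUnitary : Matrix (Fin d) (Fin d) ℂ)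

/-- A unitarily invariant norm on `d × d` complex matrices: a norm `N` with
`N (U X V) = N X` for all unitaries `U, V`. -/
structure UINorm (d : ℕ) where
  N : Matrix (Fin d) (Fin d) ℂ → ℝ
  add_le : ∀ X Y, N (X + Y) ≤ N X + N Y
  smul_eq : ∀ (c : ℂ) X, N (c • X) = ‖c‖ * N X
  pos_of_ne : ∀ X : Matrix (Fin d) (Fin d) ℂ, X ≠ 0 → (0:ℝ) < N X
  unitary_inv : ∀ U V X, U ∈ Matrix.unitaryGroup (Fin d) ℂ →
    V ∈ Matrix.unitaryGroup (Fin d) ℂ → N (U * X * V) = N X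

/-! With `g = f ∘ exp`, log-convexity makes `g ≥ 0` convex. Majorization `log λ(A) ≺ c`,
`c = ∑ p_l log λ(B_l)`, places `log λ(A)` in the convex hull of the permutations of `c`
(separate by Hahn–Banach, then rearrange and sum by parts). The symmetric gauge function
`v ↦ Φ(diag v)` is permutation- and sign-invariant, hence monotone in `|v|`, so
`v ↦ Φ(diag (g ∘ v))` is convex and permutation invariant and `Φ(f(A)) ≤ Φ(diag (g ∘ c))`.
Finally `g(c_i) ≤ ∏_l f(λ_i(B_l))^{p_l}` by log-convexity, and the Hölder inequality for
symmetric gauge functions follows from weighted AM–GM after normalising each `f(λ(B_l))`. -/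

open Finset Matrix

theorem mem_convexHull_range_of_forall_exists_sum_mul_le {ι n : Type*} [Finite ι] [Fintype n]
    {v : ι → n → ℝ} {x : n → ℝ} (h : ∀ w : n → ℝ, ∃ j, ∑ i, x i * w i ≤ ∑ i, v j i * w i) :
    x ∈ convexHull ℝ (Set.range v) := by
  classical
  rw [← iInter_halfSpaces_eq (convex_convexHull ℝ _)
    ((Set.finite_range v).isClosed_convexHull ℝ), Set.mem_iInter]
  intro l
  have hl (z : n → ℝ) : l z = ∑ i, z i * l fun k => if i = k then 1 else 0 := by
    simpa using LinearMap.pi_apply_eq_sum_univ l.toLinearMap z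
  obtain ⟨j, hj⟩ := h fun i => l fun k => if i = k then 1 else 0
  exact ⟨v j, subset_convexHull ℝ _ ⟨j, rfl⟩, by rwa [hl, hl]⟩

theorem mem_convexHull_signFlip_of_abs_le {n : Type*} [Fintype n] {x y : n → ℝ}
    (h : ∀ i, |x i| ≤ y i) :
    x ∈ convexHull ℝ (Set.range fun s : n → Bool => fun i => if s i then y i else -y i) := by
  refine mem_convexHull_range_of_forall_exists_sum_mul_le fun w =>
    ⟨fun i => decide (0 ≤ w i), sum_le_sum fun i _ => ?_⟩
  have := abs_le.mp (h i)
  by_cases hw : 0 ≤ w i <;> simp [hw] <;> nlinarith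

section Majorization

variable {d : ℕ}

def prefixSum (v : Fin d → ℝ) (k : ℕ) : ℝ :=
  ∑ i ∈ univ.filter (fun i : Fin d => (i : ℕ) < k), v i

/-- Majorization `x ≺ y` for vectors already listed in decreasing order: no sorting is done. -/
def IsMajorizedBy (x y : Fin d → ℝ) : Prop :=
  (∀ k, k ≤ d → prefixSum x k ≤ prefixSum y k) ∧ ∑ i, x i = ∑ i, y i

theorem prefixSum_zero (v : Fin d → ℝ) : prefixSum v 0 = 0 := by
  simp [prefixSum]

theorem prefixSum_succ (v : Fin d → ℝ) {n : ℕ} (hn : n < d) :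
    prefixSum v (n + 1) = prefixSum v n + v ⟨n, hn⟩ := by
  rw [← sub_eq_iff_eq_add', prefixSum, prefixSum, sum_filter, sum_filter, ← sum_sub_distrib,
    ← Fintype.sum_ite_eq' (⟨n, hn⟩ : Fin d) v]
  refine sum_congr rfl fun i _ => ?_
  simp only [Fin.ext_iff]
  split_ifs <;> simp_all <;> omega

theorem prefixSum_self (v : Fin d → ℝ) : prefixSum v d = ∑ i, v i := by
  simp [prefixSum]

theorem prefixSum_sub (x y : Fin d → ℝ) (k : ℕ) :
    prefixSum (y - x) k = prefixSum y k - prefixSum x k := by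
  simp [prefixSum, Finset.sum_sub_distrib]

theorem sum_mul_le_sum_mul_of_isMajorizedBy {u x y : Fin d → ℝ} (hu : Antitone u)
    (h : IsMajorizedBy x y) : ∑ i, u i * x i ≤ ∑ i, u i * y i := by
  set z := y - x
  have hz (k : ℕ) (hk : k ≤ d) : 0 ≤ prefixSum z k := by
    rw [prefixSum_sub, sub_nonneg]
    exact h.1 k hk
  -- Abel summation, by induction on the length of the prefix
  have key (n : ℕ) (hn : n ≤ d) (c : ℝ) (hc : ∀ j : Fin d, (j : ℕ) < n → c ≤ u j) :
      c * prefixSum z n ≤ prefixSum (fun i => u i * z i) n := by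
    induction n generalizing c with
    | zero => simp [prefixSum_zero]
    | succ n ih =>
      have hprev := ih (by omega) (u ⟨n, hn⟩) fun j hj => hu (Fin.le_def.mpr hj.le)
      have hcn : c ≤ u ⟨n, hn⟩ := hc _ (Nat.lt_succ_self n)
      have hzn := hz (n + 1) hn
      rw [prefixSum_succ _ hn] at hzn ⊢
      rw [prefixSum_succ _ hn]
      nlinarith
  have hz_sum : ∑ i, z i = 0 := by simp [z, sum_sub_distrib, h.2]
  have := key d le_rfl (⨅ j, u j) fun j _ => ciInf_le (Finite.bddBelow_range u) j
  rw [prefixSum_self, prefixSum_self, hz_sum, mul_zero] at this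
  simpa [z, mul_sub, sum_sub_distrib] using this

noncomputable def antitoneSortPerm (v : Fin d → ℝ) : Equiv.Perm (Fin d) :=
  Fin.revPerm.trans (Tuple.sort v)

theorem antitone_comp_antitoneSortPerm (v : Fin d → ℝ) : Antitone (v ∘ antitoneSortPerm v) :=
  (Tuple.monotone_sort v).comp_antitone fun _ _ => Fin.rev_le_rev.mpr

theorem mem_convexHull_perm_of_isMajorizedBy {x y : Fin d → ℝ} (hx : Antitone x)
    (h : IsMajorizedBy x y) :
    x ∈ convexHull ℝ (Set.range fun σ : Equiv.Perm (Fin d) => y ∘ σ) := by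
  refine mem_convexHull_range_of_forall_exists_sum_mul_le fun w => ?_
  set σ := antitoneSortPerm w
  have hσ : Antitone (w ∘ σ) := antitone_comp_antitoneSortPerm w
  refine ⟨σ⁻¹, ?_⟩
  calc ∑ i, x i * w i = ∑ i, x i * (w ∘ σ) (σ⁻¹ i) := by simp
    _ ≤ ∑ i, x i * (w ∘ σ) i := (hx.monovary hσ).sum_mul_comp_perm_le_sum_mul
    _ ≤ ∑ i, y i * (w ∘ σ) i := by
      simpa only [mul_comm] using sum_mul_le_sum_mul_of_isMajorizedBy hσ h
    _ = ∑ i, (y ∘ ⇑σ⁻¹) i * w i := by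
      rw [← Equiv.sum_comp σ fun i => (y ∘ ⇑σ⁻¹) i * w i]
      simp

end Majorization

/-- Log-convexity of a nonnegative `g`, stated multiplicatively so that `g` may vanish. -/
def IsLogConvex (g : ℝ → ℝ) : Prop :=
  ∀ x y t : ℝ, 0 ≤ t → t ≤ 1 → g (t * x + (1 - t) * y) ≤ g x ^ t * g y ^ (1 - t)

namespace IsLogConvex

variable {g : ℝ → ℝ}

theorem convexOn (hg : IsLogConvex g) (hg0 : ∀ t, 0 ≤ g t) : ConvexOn ℝ Set.univ g := by
  refine ⟨convex_univ, fun x _ y _ a b ha hb hab => ?_⟩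
  obtain rfl : b = 1 - a := by linarith
  calc g (a * x + (1 - a) * y) ≤ g x ^ a * g y ^ (1 - a) := hg x y a ha (by linarith)
    _ ≤ a * g x + (1 - a) * g y :=
      Real.geom_mean_le_arith_mean2_weighted ha hb (hg0 x) (hg0 y) (by ring)

theorem map_sum_le_prod_rpow {ι : Type*} (hg : IsLogConvex g) (hg0 : ∀ t, 0 ≤ g t)
    {s : Finset ι} {w t : ι → ℝ} (hw : ∀ i ∈ s, 0 ≤ w i) (hw1 : ∑ i ∈ s, w i = 1) :
    g (∑ i ∈ s, w i * t i) ≤ ∏ i ∈ s, g (t i) ^ w i := by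
  induction s using Finset.cons_induction generalizing w with
  | empty => simp at hw1
  | cons a s ha ih =>
    rw [sum_cons] at hw1 ⊢
    rw [prod_cons]
    have hwa : 0 ≤ w a := hw a (mem_cons_self a s)
    have hws : ∀ i ∈ s, 0 ≤ w i := fun i hi => hw i (mem_cons_of_mem hi)
    set W := ∑ i ∈ s, w i
    have hW0 : 0 ≤ W := sum_nonneg hws
    rcases hW0.eq_or_lt with hW | hW
    · have hz : ∀ i ∈ s, w i = 0 := (sum_eq_zero_iff_of_nonneg hws).mp hW.symm
      have hwa1 : w a = 1 := by linarith
      have hsum : ∑ i ∈ s, w i * t i = 0 := sum_eq_zero fun i hi => by rw [hz i hi, zero_mul]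
      have hprod : ∏ i ∈ s, g (t i) ^ w i = 1 :=
        prod_eq_one fun i hi => by rw [hz i hi, Real.rpow_zero]
      simp [hsum, hprod, hwa1]
    have hrest := ih (w := fun i => w i / W) (fun i hi => div_nonneg (hws i hi) hW.le)
      (by rw [← sum_div, div_self hW.ne'])
    have hW1 : 1 - w a = W := by linarith
    have hmean : W * ∑ i ∈ s, w i / W * t i = ∑ i ∈ s, w i * t i := by
      rw [mul_sum]
      exact sum_congr rfl fun i _ => by field_simp [hW.ne']
    calc g (w a * t a + ∑ i ∈ s, w i * t i)
        = g (w a * t a + (1 - w a) * ∑ i ∈ s, w i / W * t i) := by rw [hW1, hmean]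
      _ ≤ g (t a) ^ w a * g (∑ i ∈ s, w i / W * t i) ^ (1 - w a) := hg _ _ _ hwa (by linarith)
      _ ≤ g (t a) ^ w a * (∏ i ∈ s, g (t i) ^ (w i / W)) ^ W := by
        rw [hW1]
        exact mul_le_mul_of_nonneg_left (Real.rpow_le_rpow (hg0 _) hrest hW.le)
          (Real.rpow_nonneg (hg0 _) _)
      _ = g (t a) ^ w a * ∏ i ∈ s, g (t i) ^ w i := by
        rw [← Real.finsetProd_rpow s _ fun i _ => Real.rpow_nonneg (hg0 _) _]
        congr 1
        refine prod_congr rfl fun i _ => ?_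
        rw [← Real.rpow_mul (hg0 _), div_mul_cancel₀ _ hW.ne']

end IsLogConvex

theorem prod_rpow_le_prod_rpow_mul_sum_div {ι : Type*} [Fintype ι] {a c p : ι → ℝ}
    (ha : ∀ i, 0 ≤ a i) (hc : ∀ i, 0 ≤ c i) (hac : ∀ i, c i = 0 → a i = 0) (hp : ∀ i, 0 ≤ p i)
    (hp1 : ∑ i, p i = 1) :
    ∏ i, a i ^ p i ≤ (∏ i, c i ^ p i) * ∑ i, p i * (a i / c i) := by
  by_cases hzero : ∀ i, p i ≠ 0 → c i ≠ 0
  swap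
  · obtain ⟨i, hpi, hci⟩ : ∃ i, p i ≠ 0 ∧ c i = 0 := by simpa using hzero
    rw [prod_eq_zero (mem_univ i) (by rw [hac i hci, Real.zero_rpow hpi])]
    exact mul_nonneg (prod_nonneg fun i _ => Real.rpow_nonneg (hc i) _)
      (sum_nonneg fun i _ => mul_nonneg (hp i) (div_nonneg (ha i) (hc i)))
  calc ∏ i, a i ^ p i = ∏ i, c i ^ p i * (a i / c i) ^ p i := by
        refine prod_congr rfl fun i _ => ?_
        rcases eq_or_ne (p i) 0 with hpi | hpi
        · simp [hpi]
        · rw [← Real.mul_rpow (hc i) (div_nonneg (ha i) (hc i)), mul_div_cancel₀ _ (hzero i hpi)]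
    _ ≤ (∏ i, c i ^ p i) * ∑ i, p i * (a i / c i) := by
      rw [prod_mul_distrib]
      exact mul_le_mul_of_nonneg_left
        (Real.geom_mean_le_arith_mean_weighted _ _ _ (fun i _ => hp i) hp1
          fun i _ => div_nonneg (ha i) (hc i))
        (prod_nonneg fun i _ => Real.rpow_nonneg (hc i) _)

theorem Matrix.permMatrix_mem_unitaryGroup {n R : Type*} [Fintype n] [DecidableEq n]
    [CommRing R] [StarRing R] (σ : Equiv.Perm n) : σ.permMatrix R ∈ unitaryGroup n R := by
  rw [mem_unitaryGroup_iff, star_eq_conjTranspose, conjTranspose_permMatrix, ← permMatrix_mul,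
    inv_mul_cancel, permMatrix_one]

namespace UINorm

variable {d : ℕ} (Φ : UINorm d)

def symmGauge : Seminorm ℝ (Fin d → ℝ) :=
  Seminorm.of (fun v => Φ.N (diagonal fun i => (v i : ℂ)))
    (fun v w => by
      simpa only [Pi.add_apply, Complex.ofReal_add, diagonal_add] using
        Φ.add_le (diagonal fun i => (v i : ℂ)) (diagonal fun i => (w i : ℂ)))
    (fun c v => by
      rw [← Complex.norm_real, ← Φ.smul_eq, ← diagonal_smul]
      congr 2
      funext i
      simp)

theorem symmGauge_apply (v : Fin d → ℝ) : Φ.symmGauge v = Φ.N (diagonal fun i => (v i : ℂ)) :=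
  rfl

theorem symmGauge_comp_perm (v : Fin d → ℝ) (σ : Equiv.Perm (Fin d)) :
    Φ.symmGauge (v ∘ σ) = Φ.symmGauge v := by
  have hconj : σ.permMatrix ℂ * diagonal (fun i => (v i : ℂ)) * (σ⁻¹).permMatrix ℂ =
      diagonal fun i => ((v ∘ σ) i : ℂ) := by
    rw [PEquiv.toMatrix_toPEquiv_mul, PEquiv.mul_toMatrix_toPEquiv, submatrix_submatrix]
    exact submatrix_diagonal_equiv _ σ
  rw [symmGauge_apply, symmGauge_apply, ← hconj]
  exact Φ.unitary_inv _ _ _ (permMatrix_mem_unitaryGroup σ) (permMatrix_mem_unitaryGroup σ⁻¹)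

theorem symmGauge_signFlip (v : Fin d → ℝ) (s : Fin d → Bool) :
    Φ.symmGauge (fun i => if s i then v i else -v i) = Φ.symmGauge v := by
  set ε : Fin d → ℂ := fun i => if s i then 1 else -1
  have hε : diagonal ε ∈ unitaryGroup (Fin d) ℂ := by
    rw [mem_unitaryGroup_iff, star_eq_conjTranspose, diagonal_conjTranspose, diagonal_mul_diagonal,
      ← diagonal_one]
    congr 1
    funext i
    by_cases hs : s i <;> simp [ε, hs]
  have hflip : diagonal ε * diagonal (fun i => (v i : ℂ)) * 1 =
      diagonal fun i => ((if s i then v i else -v i : ℝ) : ℂ) := by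
    rw [mul_one, diagonal_mul_diagonal]
    congr 1
    funext i
    by_cases hs : s i <;> simp [ε, hs]
  rw [symmGauge_apply, symmGauge_apply, ← hflip]
  exact Φ.unitary_inv _ _ _ hε (one_mem _)

theorem symmGauge_le_of_abs_le {x y : Fin d → ℝ} (h : ∀ i, |x i| ≤ y i) :
    Φ.symmGauge x ≤ Φ.symmGauge y := by
  obtain ⟨_, ⟨s, rfl⟩, hle⟩ := Φ.symmGauge.convexOn.exists_ge_of_mem_convexHull
    (Set.subset_univ _) (mem_convexHull_signFlip_of_abs_le h)
  exact hle.trans_eq (Φ.symmGauge_signFlip y s)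

theorem convexOn_symmGauge_comp {g : ℝ → ℝ} (hg : ConvexOn ℝ Set.univ g) (hg0 : ∀ t, 0 ≤ g t) :
    ConvexOn ℝ Set.univ fun v : Fin d → ℝ => Φ.symmGauge (g ∘ v) := by
  refine ⟨convex_univ, fun v _ w _ a b ha hb hab => ?_⟩
  calc Φ.symmGauge (g ∘ (a • v + b • w))
      ≤ Φ.symmGauge (a • (g ∘ v) + b • (g ∘ w)) := Φ.symmGauge_le_of_abs_le fun i => by
        show |g (a * v i + b * w i)| ≤ a * g (v i) + b * g (w i)
        rw [abs_of_nonneg (hg0 _)]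
        exact hg.2 trivial trivial ha hb hab
    _ ≤ a • Φ.symmGauge (g ∘ v) + b • Φ.symmGauge (g ∘ w) :=
        Φ.symmGauge.convexOn.2 trivial trivial ha hb hab

theorem eq_zero_of_symmGauge_eq_zero {v : Fin d → ℝ} (h : Φ.symmGauge v = 0) : v = 0 := by
  by_contra hv
  refine (Φ.pos_of_ne _ fun hdiag => hv ?_).ne' h
  funext i
  simpa using congrFun (congrFun hdiag i) i

theorem symmGauge_comp_le_of_isMajorizedBy {x y : Fin d → ℝ} (hx : Antitone x)
    (h : IsMajorizedBy x y) {g : ℝ → ℝ} (hg : ConvexOn ℝ Set.univ g) (hg0 : ∀ t, 0 ≤ g t) :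
    Φ.symmGauge (g ∘ x) ≤ Φ.symmGauge (g ∘ y) := by
  obtain ⟨_, ⟨σ, rfl⟩, hle⟩ := (Φ.convexOn_symmGauge_comp hg hg0).exists_ge_of_mem_convexHull
    (Set.subset_univ _) (mem_convexHull_perm_of_isMajorizedBy hx h)
  exact hle.trans_eq (Φ.symmGauge_comp_perm (g ∘ y) σ)

theorem symmGauge_prod_rpow_le {ι : Type*} [Fintype ι] (v : ι → Fin d → ℝ)
    (hv : ∀ l i, 0 ≤ v l i) {p : ι → ℝ} (hp : ∀ l, 0 ≤ p l) (hp1 : ∑ l, p l = 1) :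
    Φ.symmGauge (fun i => ∏ l, v l i ^ p l) ≤ ∏ l, Φ.symmGauge (v l) ^ p l := by
  set c := fun l => Φ.symmGauge (v l)
  set C := ∏ l, c l ^ p l
  have hc0 (l : ι) : 0 ≤ c l := apply_nonneg _ _
  have hC : 0 ≤ C := prod_nonneg fun l _ => Real.rpow_nonneg (hc0 l) _
  have hpt (i : Fin d) : |∏ l, v l i ^ p l| ≤ (C • ∑ l, (p l / c l) • v l) i := by
    rw [abs_of_nonneg (prod_nonneg fun l _ => Real.rpow_nonneg (hv l i) _)]
    refine (prod_rpow_le_prod_rpow_mul_sum_div (fun l => hv l i) hc0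
      (fun l hl => congrFun (Φ.eq_zero_of_symmGauge_eq_zero hl) i) hp hp1).trans_eq ?_
    simp only [Pi.smul_apply, Finset.sum_apply, smul_eq_mul]
    congr 1
    exact sum_congr rfl fun l _ => by ring
  calc Φ.symmGauge (fun i => ∏ l, v l i ^ p l)
      ≤ Φ.symmGauge (C • ∑ l, (p l / c l) • v l) := Φ.symmGauge_le_of_abs_le hpt
    _ ≤ C * ∑ l, p l / c l * c l := by
      rw [map_smul_eq_mul, Real.norm_of_nonneg hC]
      gcongr
      refine (le_sum_of_subadditive Φ.symmGauge (map_zero _).le (map_add_le_add _) _ _).trans_eq ?_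
      refine sum_congr rfl fun l _ => ?_
      rw [map_smul_eq_mul, Real.norm_of_nonneg (div_nonneg (hp l) (hc0 l))]
    _ ≤ C * ∑ l, p l := by
      gcongr with l
      rcases eq_or_ne (c l) 0 with hc | hc
      · simp [hc, hp l]
      · rw [div_mul_cancel₀ _ hc]
    _ = C := by rw [hp1, mul_one]

theorem N_herFun {A : Matrix (Fin d) (Fin d) ℂ} (hA : A.IsHermitian) (f : ℝ → ℝ) :
    Φ.N (herFun hA f) = Φ.symmGauge fun i => f (eigDesc hA i) :=
  calc Φ.N (herFun hA f) = Φ.symmGauge fun i => f (hA.eigenvalues i) :=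
        Φ.unitary_inv _ _ _ hA.eigenvectorUnitary.2 (Unitary.star_mem hA.eigenvectorUnitary.2)
    _ = _ := (Φ.symmGauge_comp_perm _ (antitoneSortPerm hA.eigenvalues)).symm

end UINorm

section Eigenvalues

variable {d : ℕ} {A : Matrix (Fin d) (Fin d) ℂ}

theorem eigDesc_antitone (hA : A.IsHermitian) : Antitone (eigDesc hA) :=
  antitone_comp_antitoneSortPerm hA.eigenvalues

theorem eigDesc_pos (hA : A.PosDef) (i : Fin d) : 0 < eigDesc hA.1 i :=
  hA.eigenvalues_pos _

theorem antitone_log_eigDesc (hA : A.PosDef) : Antitone fun i => Real.log (eigDesc hA.1 i) :=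
  fun _ j hij => Real.log_le_log (eigDesc_pos hA j) (eigDesc_antitone hA.1 hij)

end Eigenvalues

theorem log_majorization_average_implies_norm_ineq_general
    {d m : ℕ} {A : Matrix (Fin d) (Fin d) ℂ} (hA : A.PosDef)
    {B : Fin m → Matrix (Fin d) (Fin d) ℂ} (hB : ∀ l, (B l).PosDef)
    (p : Fin m → ℝ) (hp : ∀ l, 0 ≤ p l) (hp_sum : ∑ l, p l = 1)
    (hmaj : (∀ k, k ≤ d →
        ∑ i ∈ Finset.univ.filter (fun i : Fin d => (i : ℕ) < k),
          Real.log (eigDesc hA.1 i) ≤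
        ∑ i ∈ Finset.univ.filter (fun i : Fin d => (i : ℕ) < k),
          ∑ l, p l * Real.log (eigDesc (hB l).1 i)) ∧
      ∑ i, Real.log (eigDesc hA.1 i) = ∑ i, ∑ l, p l * Real.log (eigDesc (hB l).1 i))
    (f : ℝ → ℝ)
    (hf_nonneg : ∀ x : ℝ, 0 < x → 0 ≤ f x)
    (hf_logconv : ∀ x y t : ℝ, 0 ≤ t → t ≤ 1 →
      f (Real.exp (t * x + (1 - t) * y)) ≤ f (Real.exp x) ^ t * f (Real.exp y) ^ (1 - t)) :
    ∀ Φ : UINorm d, Φ.N (herFun hA.1 f) ≤ ∏ l, Φ.N (herFun (hB l).1 f) ^ p l := by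
  intro Φ
  set g : ℝ → ℝ := fun x => f (Real.exp x)
  have hg0 (x : ℝ) : 0 ≤ g x := hf_nonneg _ (Real.exp_pos x)
  have hg : IsLogConvex g := hf_logconv
  have hg_log {B : Matrix (Fin d) (Fin d) ℂ} (hB : B.PosDef) (i : Fin d) :
      g (Real.log (eigDesc hB.1 i)) = f (eigDesc hB.1 i) := by
    simp only [g, Real.exp_log (eigDesc_pos hB i)]
  calc Φ.N (herFun hA.1 f) = Φ.symmGauge (g ∘ fun i => Real.log (eigDesc hA.1 i)) := by
        rw [Φ.N_herFun]
        exact congrArg _ (funext fun i => (hg_log hA i).symm)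
    _ ≤ Φ.symmGauge (g ∘ fun i => ∑ l, p l * Real.log (eigDesc (hB l).1 i)) :=
        Φ.symmGauge_comp_le_of_isMajorizedBy (antitone_log_eigDesc hA) hmaj (hg.convexOn hg0) hg0
    _ ≤ Φ.symmGauge (fun i => ∏ l, f (eigDesc (hB l).1 i) ^ p l) :=
        Φ.symmGauge_le_of_abs_le fun i => by
          show |g (∑ l, p l * Real.log (eigDesc (hB l).1 i))| ≤ _
          rw [abs_of_nonneg (hg0 _)]
          exact (hg.map_sum_le_prod_rpow hg0 (fun l _ => hp l) hp_sum).trans_eq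
            (prod_congr rfl fun l _ => by rw [hg_log (hB l)])
    _ ≤ ∏ l, Φ.symmGauge (fun i => f (eigDesc (hB l).1 i)) ^ p l :=
        Φ.symmGauge_prod_rpow_le _ (fun l i => hf_nonneg _ (eigDesc_pos (hB l) i)) hp hp_sum
    _ = ∏ l, Φ.N (herFun (hB l).1 f) ^ p l := by simp only [Φ.N_herFun]

/-- **Theorem 5.1, (I) ⇒ (II), discrete positive definite case.** Let `A, B l` be
positive definite with `log λ(A) ≺ ∑ l, p l • log λ(B l)` (majorization).  Then for
every continuous `f : (0,∞) → [0,∞)` with `x ↦ log f(e^x)` convex on `ℝ` (encoded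
multiplicatively) and every unitarily invariant norm `N`,
`N (f(A)) ≤ ∏ l, N (f(B l)) ^ (p l)`. -/
theorem log_majorization_average_implies_norm_ineq
    {d m : ℕ} {A : Matrix (Fin d) (Fin d) ℂ} (hA : A.PosDef)
    {B : Fin m → Matrix (Fin d) (Fin d) ℂ} (hB : ∀ l, (B l).PosDef)
    (p : Fin m → ℝ) (hp : ∀ l, 0 ≤ p l) (hp_sum : ∑ l, p l = 1)
    (hmaj : (∀ k, k ≤ d →
        ∑ i ∈ Finset.univ.filter (fun i : Fin d => (i : ℕ) < k),
          Real.log (eigDesc hA.1 i) ≤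
        ∑ i ∈ Finset.univ.filter (fun i : Fin d => (i : ℕ) < k),
          ∑ l, p l * Real.log (eigDesc (hB l).1 i)) ∧
      ∑ i, Real.log (eigDesc hA.1 i) = ∑ i, ∑ l, p l * Real.log (eigDesc (hB l).1 i))
    (f : ℝ → ℝ)
    (hf_cont : ContinuousOn f (Set.Ioi (0 : ℝ)))
    (hf_nonneg : ∀ x : ℝ, 0 < x → 0 ≤ f x)
    (hf_logconv : ∀ x y t : ℝ, 0 ≤ t → t ≤ 1 →
      f (Real.exp (t * x + (1 - t) * y)) ≤ f (Real.exp x) ^ t * f (Real.exp y) ^ (1 - t)) :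
    ∀ Φ : UINorm d, Φ.N (herFun hA.1 f) ≤ ∏ l, Φ.N (herFun (hB l).1 f) ^ p l :=
  log_majorization_average_implies_norm_ineq_general hA hB p hp hp_sum hmaj f hf_nonneg hf_logconv
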